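/- The overpartition function satisfies the congruence p̄(5n+3) ≡ 0 (mod 4) for all n ≥ 0. -/

import Mathlib

/-!
Since `(1 - q²) / (1 - q)² = (1 + q) / (1 - q)`, the generating function is
`∏ₖ (1 + qᵏ) / (1 - qᵏ) = ∏ₖ (1 + 2qᵏ / (1 - qᵏ))`. Modulo 4 all products of two or more
of the terms `2qᵏ / (1 - qᵏ)` vanish, so `∑ p̄(n) qⁿ ≡ 1 + 2 ∑ₖ qᵏ / (1 - qᵏ) = 1 + 2 ∑ₙ d(n) qⁿ`,
where `d(n)` is the number of divisors of `n`. Divisors of `n` pair off as `d ↔ n / d`, so `d(n)`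
is even unless `n` is a square, and `5n + 3` is never a square since squares are `0, 1, 4 mod 5`.
To read off the coefficient of `qᵐ`, all products are truncated to `k ≤ m` and compared
modulo `q^(m+1)`.
-/

open PowerSeries

/-- The infinite product `(q^a; q^b)_∞ = ∏_{n≥0} (1 - q^{a+bn})` as a formal power series:
its `d`-th coefficient is that of any sufficiently long finite truncation of the product. -/
noncomputable def qpoch (a b : ℕ) : PowerSeries ℚ :=
  PowerSeries.mk fun d =>
    PowerSeries.coeff (R := ℚ) d
      (∏ n ∈ Finset.range (d + 1), (1 - (X : PowerSeries ℚ) ^ (a + b * n)))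

/-- `(q^a; q^b)_∞` viewed as a formal Laurent series. -/
noncomputable def E (a b : ℕ) : LaurentSeries ℚ := (qpoch a b : LaurentSeries ℚ)

/-- `q` as a formal Laurent series. -/
noncomputable def Lq : LaurentSeries ℚ := ((X : PowerSeries ℚ) : LaurentSeries ℚ)

open Finset

theorem Nat.even_card_divisors_of_not_isSquare {m : ℕ} (hm : ¬IsSquare m) : Even #m.divisors := by
  rw [← ZMod.natCast_eq_zero_iff_even, card_eq_sum_ones, Nat.cast_sum, Nat.cast_one]
  refine sum_involution (fun d _ => m / d) (fun _ _ => rfl) (fun d hd _ hdd => hm ⟨d, ?_⟩)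
    (fun d hd => ?_)
    (fun d hd => Nat.div_div_self (dvd_of_mem_divisors hd) (ne_zero_of_mem_divisors hd))
  · rw [← Nat.mul_div_cancel' (dvd_of_mem_divisors hd), hdd]
  · exact mem_divisors.2 ⟨Nat.div_dvd_of_dvd (dvd_of_mem_divisors hd), ne_zero_of_mem_divisors hd⟩

theorem not_isSquare_five_mul_add_three (n : ℕ) : ¬IsSquare (5 * n + 3) := by
  rintro ⟨r, hr⟩
  have h := congrArg (Nat.cast : ℕ → ZMod 5) hr
  push_cast at h
  generalize (r : ZMod 5) = x at h
  generalize (n : ZMod 5) = y at h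
  revert x y
  decide

noncomputable section

namespace Overpartition

variable {R : Type*} [CommRing R]

def reduceModXPow (N : ℕ) : R⟦X⟧ →+* R⟦X⟧ ⧸ Ideal.span {(X : R⟦X⟧) ^ N} :=
  Ideal.Quotient.mk _

theorem reduceModXPow_eq_iff {N : ℕ} {f g : R⟦X⟧} :
    reduceModXPow N f = reduceModXPow N g ↔ ∀ m < N, coeff m f = coeff m g := by
  simp only [reduceModXPow, Ideal.Quotient.eq, Ideal.mem_span_singleton, X_pow_dvd_iff, map_sub,
    sub_eq_zero]

theorem reduceModXPow_X_pow {N k : ℕ} (h : N ≤ k) : reduceModXPow N (X ^ k : R⟦X⟧) = 0 :=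
  Ideal.Quotient.eq_zero_iff_mem.2 (Ideal.mem_span_singleton.2 (pow_dvd_pow X h))

theorem reduceModXPow_prod_range_one_sub_X_pow {N M M' : ℕ} {e : ℕ → ℕ} (hM : M ≤ M')
    (he : ∀ n, M ≤ n → N ≤ e n) :
    reduceModXPow N (∏ n ∈ range M', (1 - X ^ e n : R⟦X⟧)) =
      reduceModXPow N (∏ n ∈ range M, (1 - X ^ e n : R⟦X⟧)) := by
  have htail : reduceModXPow N (∏ n ∈ Ico M M', (1 - X ^ e n : R⟦X⟧)) = 1 := by
    rw [map_prod]
    refine prod_eq_one fun n hn => ?_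
    rw [map_sub, map_one, reduceModXPow_X_pow (he n (mem_Ico.1 hn).1), sub_zero]
  rw [← prod_range_mul_prod_Ico _ hM, map_mul, htail, mul_one]

variable (R) in
def qProd (a b : ℕ) : R⟦X⟧ :=
  mk fun d => coeff d (∏ n ∈ range (d + 1), (1 - X ^ (a + b * n) : R⟦X⟧))

theorem map_qProd {S : Type*} [CommRing S] (f : R →+* S) (a b : ℕ) :
    map f (qProd R a b) = qProd S a b := by
  ext d
  rw [qProd, qProd, coeff_map, coeff_mk, coeff_mk, ← coeff_map, map_prod]
  simp only [map_sub, map_one, map_pow, map_X]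

theorem reduceModXPow_qProd {a b N M : ℕ} (hb : 0 < b) (hM : N ≤ a + b * M) :
    reduceModXPow N (qProd R a b) =
      reduceModXPow N (∏ n ∈ range M, (1 - X ^ (a + b * n) : R⟦X⟧)) := by
  refine reduceModXPow_eq_iff.2 fun d hd => ?_
  rw [qProd, coeff_mk]
  refine reduceModXPow_eq_iff.1 ?_ d d.lt_succ_self
  rcases le_total M (d + 1) with h | h
  · exact reduceModXPow_prod_range_one_sub_X_pow h fun n hn => by nlinarith
  · exact (reduceModXPow_prod_range_one_sub_X_pow h fun n hn => by nlinarith).symm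

variable (R) in
def geomX (k : ℕ) : R⟦X⟧ := mk fun i => if k ∣ i then 1 else 0

theorem one_sub_X_pow_mul_geomX {k : ℕ} (hk : 0 < k) : (1 - X ^ k) * geomX R k = 1 := by
  ext i
  rw [sub_mul, one_mul, map_sub, coeff_X_pow_mul', geomX, coeff_mk, coeff_one, coeff_mk]
  rcases Nat.eq_zero_or_pos i with rfl | hi
  · simp [hk.ne']
  · by_cases hki : k ≤ i
    · obtain ⟨j, rfl⟩ := Nat.exists_eq_add_of_le hki
      simp [hk.ne', Nat.dvd_add_right (dvd_refl k)]
    · simp [hki, hi.ne', Nat.not_dvd_of_pos_of_lt hi (not_le.1 hki)]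

theorem prod_one_add_two_mul_of_four_eq_zero {A ι : Type*} [CommRing A] (h4 : (4 : A) = 0)
    (s : Finset ι) (a : ι → A) : ∏ i ∈ s, (1 + 2 * a i) = 1 + 2 * ∑ i ∈ s, a i := by
  classical
  induction s using Finset.induction_on with
  | empty => simp
  | insert i s hi ih =>
    rw [prod_insert hi, sum_insert hi, ih]
    linear_combination (a i * ∑ j ∈ s, a j) * h4

theorem prod_one_add_X_pow_of_four_eq_zero (h4 : (4 : R) = 0) {s : Finset ℕ}
    (hs : ∀ k ∈ s, 0 < k) :
    ∏ k ∈ s, (1 + X ^ k : R⟦X⟧) =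
      (∏ k ∈ s, (1 - X ^ k)) * (1 + 2 * ∑ k ∈ s, (geomX R k - 1)) := by
  have h4' : (4 : R⟦X⟧) = 0 := by rw [← map_ofNat C 4, h4, map_zero]
  rw [← prod_one_add_two_mul_of_four_eq_zero h4', ← prod_mul_distrib]
  refine prod_congr rfl fun k hk => ?_
  linear_combination (-2) * one_sub_X_pow_mul_geomX (R := R) (hs k hk)

theorem coeff_sum_geomX_sub_one (s : Finset ℕ) {m : ℕ} (hm : m ≠ 0) :
    coeff m (∑ k ∈ s, (geomX R k - 1)) = (#{k ∈ s | k ∣ m} : R) := by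
  simp only [map_sum, map_sub, geomX, coeff_mk, coeff_one, hm, if_false, sub_zero, sum_boole]

theorem isUnit_prod_one_sub_X_pow {s : Finset ℕ} (hs : ∀ k ∈ s, 0 < k) :
    IsUnit (∏ k ∈ s, (1 - X ^ k : R⟦X⟧)) := by
  rw [isUnit_iff_constantCoeff, map_prod, prod_eq_one fun k hk => by simp [(hs k hk).ne']]
  exact isUnit_one

theorem coeff_eq_two_mul_card_divisors (h4 : (4 : R) = 0) {P : R⟦X⟧}
    (hP : P * qProd R 1 1 ^ 2 = qProd R 2 2) {m : ℕ} (hm : m ≠ 0) :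
    coeff m P = 2 * #m.divisors := by
  have hs : ∀ k ∈ Ico 1 (m + 1), 0 < k := fun k hk => (mem_Ico.1 hk).1
  have reindex (f : ℕ → R⟦X⟧) : ∏ k ∈ Ico 1 (m + 1), f k = ∏ n ∈ range m, f (1 + n) := by
    rw [prod_Ico_eq_prod_range, Nat.add_sub_cancel]
  set F := ∏ k ∈ Ico 1 (m + 1), (1 - X ^ k : R⟦X⟧) with hF_def
  set D := ∑ k ∈ Ico 1 (m + 1), (geomX R k - 1)
  have h11 : reduceModXPow (m + 1) (qProd R 1 1) = reduceModXPow (m + 1) F := by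
    rw [reduceModXPow_qProd (M := m) one_pos (by omega), hF_def, reindex]
    simp only [one_mul]
  have h22 :
      reduceModXPow (m + 1) (qProd R 2 2) = reduceModXPow (m + 1) (F * (F * (1 + 2 * D))) := by
    rw [reduceModXPow_qProd (M := m) two_pos (by omega),
      ← prod_one_add_X_pow_of_four_eq_zero h4 hs, hF_def, ← prod_mul_distrib, reindex]
    exact congrArg _ (prod_congr rfl fun n _ => by ring)
  have hF : IsUnit (reduceModXPow (m + 1) F) := (isUnit_prod_one_sub_X_pow hs).map _
  have hPD : reduceModXPow (m + 1) P = reduceModXPow (m + 1) (1 + 2 * D) := by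
    have h := congrArg (reduceModXPow (m + 1)) hP
    rw [map_mul, map_pow, h11, h22, map_mul, map_mul] at h
    exact (hF.pow 2).mul_left_cancel (by linear_combination h)
  rw [reduceModXPow_eq_iff.1 hPD m m.lt_succ_self, map_add, coeff_one, if_neg hm, zero_add,
    ← map_ofNat C 2, coeff_C_mul, coeff_sum_geomX_sub_one _ hm, Nat.divisors]

theorem coeff_zero_qProd {a : ℕ} (ha : 0 < a) (b : ℕ) : coeff 0 (qProd R a b) = 1 := by
  simp [qProd, ha.ne']

theorem mk_mul_qProd_sq_of_generatingFunction {p : ℕ → ℤ}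
    (h : ((mk fun n => (p n : ℚ) : ℚ⟦X⟧) : LaurentSeries ℚ) = E 2 2 / E 1 1 ^ 2) :
    mk p * qProd ℤ 1 1 ^ 2 = qProd ℤ 2 2 := by
  have hE : E 1 1 ≠ 0 := fun h0 => by
    have := congrArg (coeff 0) (HahnSeries.ofPowerSeries_injective (h0.trans (map_zero _).symm))
    rw [show qpoch 1 1 = qProd ℚ 1 1 from rfl, coeff_zero_qProd one_pos, map_zero] at this
    exact one_ne_zero this
  refine map_injective (Int.castRingHom ℚ) Int.cast_injective
    (HahnSeries.ofPowerSeries_injective (Γ := ℤ) ?_)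
  have hp : map (Int.castRingHom ℚ) (mk p) = mk fun n => (p n : ℚ) := by ext; simp
  rw [map_mul, map_pow, map_qProd, map_qProd, hp, map_mul, map_pow, h]
  exact div_mul_cancel₀ _ (pow_ne_zero 2 hE)

theorem two_mul_card_divisors_eq_zero {m : ℕ} (hm : ¬IsSquare m) :
    (2 : ZMod 4) * #m.divisors = 0 := by
  obtain ⟨j, hj⟩ := Nat.even_card_divisors_of_not_isSquare hm
  rw [hj, Nat.cast_add, ← two_mul, ← mul_assoc]
  exact zero_mul _

end Overpartition

end

open Overpartition in
theorem overpartition_five_n_three_mod_four (pbar : ℕ → ℤ)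
    (hgen : ((PowerSeries.mk (fun n => (pbar n : ℚ)) : PowerSeries ℚ) : LaurentSeries ℚ)
      = E 2 2 / E 1 1 ^ 2) :
    ∀ n : ℕ, (4 : ℤ) ∣ pbar (5 * n + 3) := by
  intro n
  have hP :=
    congrArg (map (Int.castRingHom (ZMod 4))) (mk_mul_qProd_sq_of_generatingFunction hgen)
  rw [map_mul, map_pow, map_qProd, map_qProd] at hP
  have hcoeff := coeff_eq_two_mul_card_divisors (by decide) hP (by omega : 5 * n + 3 ≠ 0)
  rw [coeff_map, coeff_mk, two_mul_card_divisors_eq_zero (not_isSquare_five_mul_add_three n)]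
    at hcoeff
  exact (ZMod.intCast_zmod_eq_zero_iff_dvd _ 4).1 hcoeff
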